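/- arXiv:2103.00083 — 2 statements merged into one kernel-verified Lean document; each statement's English description precedes it below -/
import Mathlib

section
/- Let A be a finite set of exclusion probabilities α ∈ (0,1), let T = ∪_{α∈A} {α/2, 1−α/2}, and let q : T → ℝ be a collection of predicted quantiles with ℓ_α := q(α/2) ≤ q(1−α/2) =: u_α for each α ∈ A. Then for every y ∈ ℝ, the weighted interval score equals twice the total pinball loss: ∑_{α∈A} [α·(u_α − ℓ_α) + 2·dist(y, [ℓ_α, u_α])] = 2·∑_{τ∈T} ψ_τ(y − q(τ)), where dist(y, [ℓ, u]) = max{ℓ − y, y − u, 0}. -/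
/-!
Writing `ψ_τ(z) = τ z + (-z)₊` and, for `ℓ ≤ u`, `dist(y, [ℓ, u]) = (ℓ - y)₊ + (y - u)₊`, the
interval score of a single `α` is twice the sum of the pinball losses at `α/2` and `1 - α/2`
(use `(u - y)₊ - (y - u)₊ = u - y`). Summing over `α` gives the theorem, since
`α/2 < 1/2 < 1 - α/2` makes the level pairs of distinct `α` disjoint.
-/

open scoped Classical

/-- The pinball (tilted-ℓ₁) loss at quantile level `τ`. -/
noncomputable def pinball (τ z : ℝ) : ℝ := if 0 ≤ z then τ * z else (1 - τ) * (-z)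

lemma pinball_eq_mul_add_max (τ z : ℝ) : pinball τ z = τ * z + max (-z) 0 := by
  unfold pinball
  split_ifs
  · rw [max_eq_right (by linarith)]; ring
  · rw [max_eq_left (by linarith)]; ring

lemma max_max_zero_eq_add_of_add_nonpos {a b : ℝ} (hab : a + b ≤ 0) :
    max (max a b) 0 = max a 0 + max b 0 := by
  rcases le_total a 0 with ha | ha <;> rcases le_total b 0 with hb | hb
  · simp [ha, hb]
  · simp [ha, hb, max_eq_right (ha.trans hb)]
  · simp [ha, hb, max_eq_left (hb.trans ha)]
  · simp [hb, (by linarith : a = 0)]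

lemma interval_score_eq_two_mul_pinball_add_pinball (α : ℝ) {ℓ u : ℝ} (hlu : ℓ ≤ u) (y : ℝ) :
    α * (u - ℓ) + 2 * max (max (ℓ - y) (y - u)) 0 =
      2 * (pinball (α / 2) (y - ℓ) + pinball (1 - α / 2) (y - u)) := by
  rw [max_max_zero_eq_add_of_add_nonpos (by linarith), pinball_eq_mul_add_max,
    pinball_eq_mul_add_max, neg_sub, neg_sub]
  have := max_zero_sub_max_neg_zero_eq_self (y - u)
  rw [neg_sub] at this
  linarith

lemma pairwiseDisjoint_quantile_levels {A : Finset ℝ} (hA : ∀ α ∈ A, 0 < α ∧ α < 1) :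
    (A : Set ℝ).PairwiseDisjoint (fun α => ({α / 2, 1 - α / 2} : Finset ℝ)) := by
  intro a ha b hb hab
  obtain ⟨ha0, ha1⟩ := hA a ha
  obtain ⟨hb0, hb1⟩ := hA b hb
  simp only [Function.onFun, Finset.disjoint_insert_left, Finset.disjoint_singleton_left,
    Finset.mem_insert, Finset.mem_singleton, not_or]
  refine ⟨⟨fun h => hab ?_, ?_⟩, ?_, fun h => hab ?_⟩ <;> linarith

/-- The weighted interval score over a finite set `A` of exclusion probabilities equals
twice the total pinball loss over the corresponding quantile levels
`T = ⋃_{α ∈ A} {α/2, 1 - α/2}`. -/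
theorem wis_eq_pinball (A : Finset ℝ) (hA : ∀ α ∈ A, 0 < α ∧ α < 1)
    (q : ℝ → ℝ) (hq : ∀ α ∈ A, q (α / 2) ≤ q (1 - α / 2)) (y : ℝ) :
    ∑ α ∈ A, (α * (q (1 - α / 2) - q (α / 2)) +
        2 * max (max (q (α / 2) - y) (y - q (1 - α / 2))) 0) =
      2 * ∑ τ ∈ A.biUnion (fun α => {α / 2, 1 - α / 2}), pinball τ (y - q τ) := by
  rw [Finset.sum_biUnion (pairwiseDisjoint_quantile_levels hA), Finset.mul_sum]
  refine Finset.sum_congr rfl fun α hα => ?_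
  have hlevels : α / 2 ≠ 1 - α / 2 := fun h => (hA α hα).2.ne (by linarith)
  rw [Finset.sum_pair hlevels]
  exact interval_score_eq_two_mul_pinball_add_pinball α (hq α hα) y
end

section
/- Let m ≥ 1, let v ∈ ℝ^m, and let u ∈ K_m be the isotonic projection of v, i.e., u minimizes the Euclidean norm ‖v − u‖₂ over all u ∈ K_m, and suppose u ≠ v. Then for every strictly increasing vector g ∈ ℝ^m (g_1 < g_2 < ⋯ < g_m) and every p > 1, the ℓ_p error strictly improves: ∑_{i=1}^m |u_i − g_i|^p < ∑_{i=1}^m |v_i − g_i|^p. -/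
/-!
Write `r = v - u` for the residual and `φ(y) = p |y|^(p-2) y` for the derivative of `|y|^p`.
By convexity, `∑ |v - g|^p ≥ ∑ |u - g|^p + ∑ φ(u_i - g_i) r_i`, so it suffices that the last sum
is positive. Testing the variational inequality of the projection against the monotone
perturbations `u ± 1` and `u + c·1_{i ≤ k}` shows that the prefix sums of `r` are nonnegative,
that they add up to `0`, and that `u` is constant across every index where the prefix sum is
positive. There `φ(u_i - g_i)` strictly decreases, because `g` strictly increases, and summation
by parts makes `∑ φ(u_i - g_i) r_i` a sum of nonnegative terms, one of them positive as `r ≠ 0`.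
-/

open Finset

theorem ConvexOn.add_mul_sub_le_of_hasDerivAt {S : Set ℝ} {f : ℝ → ℝ} {x y f' : ℝ}
    (hf : ConvexOn ℝ S f) (hx : x ∈ S) (hy : y ∈ S) (hf' : HasDerivAt f f' x) :
    f x + f' * (y - x) ≤ f y := by
  rcases lt_trichotomy x y with hxy | rfl | hxy
  · have := hf.le_slope_of_hasDerivAt hx hy hxy hf'
    rw [slope_def_field, le_div_iff₀ (sub_pos.2 hxy)] at this
    linarith
  · simp
  · have := hf.slope_le_of_hasDerivAt hy hx hxy hf'
    rw [slope_def_field, div_le_iff₀ (sub_pos.2 hxy)] at this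
    linarith

theorem strictMono_abs_rpow_sub_two_mul_self {p : ℝ} (hp : 1 < p) :
    StrictMono fun x : ℝ => |x| ^ (p - 2) * x := by
  refine strictMono_of_odd_strictMonoOn_nonneg (fun x => by simp) fun x hx y hy hxy => ?_
  have hpow (z : ℝ) (hz : 0 ≤ z) : |z| ^ (p - 2) * z = z ^ (p - 1) := by
    rcases hz.eq_or_lt with rfl | hz
    · simp [Real.zero_rpow (by linarith : p - 1 ≠ 0)]
    · rw [abs_of_pos hz, ← Real.rpow_add_one hz.ne']
      ring_nf
  rw [hpow x hx, hpow y hy]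
  exact Real.rpow_lt_rpow hx hxy (by linarith)

theorem strictConvexOn_abs_rpow {p : ℝ} (hp : 1 < p) :
    StrictConvexOn ℝ Set.univ fun x : ℝ => |x| ^ p := by
  have hderiv : deriv (fun x : ℝ => |x| ^ p) = fun x => p * (|x| ^ (p - 2) * x) := by
    ext x
    rw [(hasDerivAt_abs_rpow x hp).deriv, mul_assoc]
  refine StrictMono.strictConvexOn_univ_of_deriv
    (continuous_abs.rpow_const fun _ => .inr (by linarith)) ?_
  rw [hderiv]
  exact (strictMono_abs_rpow_sub_two_mul_self hp).const_mul (by linarith)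

theorem sum_sub_mul_sub_nonpos_of_forall_sqrt_le {ι : Type*} [Fintype ι] {K : Set (ι → ℝ)}
    (hK : Convex ℝ K) {u v w : ι → ℝ} (hu : u ∈ K) (hw : w ∈ K)
    (hmin : ∀ w ∈ K, √(∑ i, (v i - u i) ^ 2) ≤ √(∑ i, (v i - w i) ^ 2)) :
    ∑ i, (v i - u i) * (w i - u i) ≤ 0 := by
  let K' : Set (EuclideanSpace ℝ ι) := WithLp.linearEquiv 2 ℝ (ι → ℝ) ⁻¹' K
  have hK' : Convex ℝ K' := hK.linear_preimage (WithLp.linearEquiv 2 ℝ (ι → ℝ)).toLinearMap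
  have hu' : WithLp.toLp 2 u ∈ K' := hu
  have : Nonempty K' := ⟨⟨_, hu'⟩⟩
  have hdist (x y : ι → ℝ) :
      ‖WithLp.toLp 2 x - WithLp.toLp 2 y‖ = √(∑ i, (x i - y i) ^ 2) := by
    simp [EuclideanSpace.norm_eq, sq_abs]
  have hbdd : BddBelow (Set.range fun x : K' => ‖WithLp.toLp 2 v - x‖) :=
    ⟨0, by rintro _ ⟨x, rfl⟩; exact norm_nonneg _⟩
  have hnear : ‖WithLp.toLp 2 v - WithLp.toLp 2 u‖ = ⨅ x : K', ‖WithLp.toLp 2 v - x‖ := by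
    refine le_antisymm (le_ciInf fun x => ?_) (ciInf_le hbdd ⟨_, hu'⟩)
    have := hmin _ x.2
    rwa [← hdist, ← hdist] at this
  simpa [PiLp.inner_apply, mul_comm] using
    (norm_eq_iInf_iff_real_inner_le_zero hK' hu').1 hnear (WithLp.toLp 2 w) hw

theorem sum_range_mul_pos_of_sum_range_succ_nonneg {h r : ℕ → ℝ} {n : ℕ}
    (hS : ∀ k < n, 0 ≤ ∑ i ∈ range (k + 1), r i) (hsum : ∑ i ∈ range n, r i = 0)
    (hstep : ∀ k, k + 1 < n → 0 < ∑ i ∈ range (k + 1), r i → h (k + 1) < h k)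
    (hpos : ∃ k, k + 1 < n ∧ 0 < ∑ i ∈ range (k + 1), r i) :
    0 < ∑ i ∈ range n, h i * r i := by
  have hterm : ∀ k ∈ range (n - 1), 0 ≤ (h k - h (k + 1)) * ∑ i ∈ range (k + 1), r i := by
    intro k hk
    have hk : k + 1 < n := by have := mem_range.1 hk; omega
    rcases (hS k (by omega)).lt_or_eq with hlt | heq
    · exact (mul_pos (sub_pos.2 (hstep k hk hlt)) hlt).le
    · rw [← heq, mul_zero]
  obtain ⟨k, hk, hlt⟩ := hpos
  have hparts := sum_range_by_parts h r n
  simp only [smul_eq_mul, hsum, mul_zero, zero_sub, ← sum_neg_distrib, ← neg_mul,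
    neg_sub] at hparts
  rw [hparts]
  exact sum_pos' hterm ⟨k, mem_range.2 (by omega), mul_pos (sub_pos.2 (hstep k hk hlt)) hlt⟩

theorem Fin.sum_mul_pos_of_sum_Iic_nonneg {m : ℕ} {h r : Fin m → ℝ}
    (hS : ∀ k, 0 ≤ ∑ i ∈ Iic k, r i) (hsum : ∑ i, r i = 0)
    (hstep : ∀ k k', k ⋖ k' → 0 < ∑ i ∈ Iic k, r i → h k' < h k)
    (hpos : ∃ k k', k ⋖ k' ∧ 0 < ∑ i ∈ Iic k, r i) :
    0 < ∑ i, h i * r i := by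
  set H := Function.extend Fin.val h 0
  set R := Function.extend Fin.val r 0
  have hH (i : Fin m) : H i = h i := Fin.val_injective.extend_apply h 0 i
  have hR (i : Fin m) : R i = r i := Fin.val_injective.extend_apply r 0 i
  have hIic (k : Fin m) : ∑ i ∈ Iic k, r i = ∑ i ∈ range (k + 1), R i := by
    rw [Nat.range_succ_eq_Iic, ← Fin.map_valEmbedding_Iic, sum_map]
    simp [hR]
  have hcov {k : ℕ} (hk : k + 1 < m) : (⟨k, by omega⟩ : Fin m) ⋖ ⟨k + 1, hk⟩ := by
    rw [Fin.covBy_iff, Nat.covBy_iff_add_one_eq]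
  have key := sum_range_mul_pos_of_sum_range_succ_nonneg (h := H) (r := R) (n := m)
    (fun k hk => hIic ⟨k, hk⟩ ▸ hS ⟨k, hk⟩)
    (by rw [← hsum, ← Fin.sum_univ_eq_sum_range]; simp [hR])
    (fun k hk hlt => (hH ⟨k + 1, hk⟩).trans_lt <|
      (hstep _ _ (hcov hk) (hIic ⟨k, by omega⟩ ▸ hlt)).trans_eq (hH ⟨k, by omega⟩).symm)
    (by
      obtain ⟨k, k', hkk', hlt⟩ := hpos
      refine ⟨k, ?_, hIic k ▸ hlt⟩
      have := Nat.covBy_iff_add_one_eq.1 (Fin.covBy_iff.1 hkk')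
      omega)
  rwa [← Fin.sum_univ_eq_sum_range (fun i => H i * R i),
    Fintype.sum_congr _ _ fun i => by rw [hH, hR]] at key

section IsotonicProjection

variable {ι : Type*} [LinearOrder ι]

theorem convex_setOf_monotone : Convex ℝ {w : ι → ℝ | Monotone w} :=
  fun _ hf _ hg _ _ ha hb _ => (hf.const_smul ha).add (hg.const_smul hb)

theorem Monotone.add_ite_le {u : ι → ℝ} (hu : Monotone u) {k : ι} {c : ℝ}
    (hc : ∀ j, k < j → u k + c ≤ u j) : Monotone fun i => u i + if i ≤ k then c else 0 := by
  intro i j hij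
  by_cases hjk : j ≤ k
  · simp only [hij.trans hjk, hjk, if_true]
    linarith [hu hij]
  by_cases hik : i ≤ k
  · simp only [hik, hjk, if_true, if_false]
    linarith [hu hik, hc j (not_le.1 hjk)]
  · simp only [hik, hjk, if_false]
    linarith [hu hij]

variable [Fintype ι]

/-- The variational inequality characterizing `u` as the projection of `v` onto the
isotonic cone. -/
def IsIsotonicProj (v u : ι → ℝ) : Prop :=
  Monotone u ∧ ∀ w : ι → ℝ, Monotone w → ∑ i, (v i - u i) * (w i - u i) ≤ 0

theorem isIsotonicProj_of_forall_sqrt_le {v u : ι → ℝ} (hu : Monotone u)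
    (hmin : ∀ w : ι → ℝ, Monotone w →
      √(∑ i, (v i - u i) ^ 2) ≤ √(∑ i, (v i - w i) ^ 2)) :
    IsIsotonicProj v u :=
  ⟨hu, fun _ hw => sum_sub_mul_sub_nonpos_of_forall_sqrt_le convex_setOf_monotone hu hw hmin⟩

namespace IsIsotonicProj

variable {v u : ι → ℝ}

theorem sum_sub_eq_zero (h : IsIsotonicProj v u) : ∑ i, (v i - u i) = 0 := by
  have hshift (c : ℝ) : c * ∑ i, (v i - u i) ≤ 0 := by
    have := h.2 (fun i => u i + c) fun i j hij => by linarith [h.1 hij]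
    simp only [add_sub_cancel_left] at this
    rwa [← sum_mul, mul_comm] at this
  linarith [hshift 1, hshift (-1)]

variable [LocallyFiniteOrderBot ι]

theorem mul_sum_Iic_sub_nonpos (h : IsIsotonicProj v u) {k : ι} {c : ℝ}
    (hc : ∀ j, k < j → u k + c ≤ u j) : c * ∑ i ∈ Iic k, (v i - u i) ≤ 0 := by
  have := h.2 _ (h.1.add_ite_le hc)
  simp only [add_sub_cancel_left, mul_ite, mul_zero] at this
  rwa [← sum_filter, filter_ge_eq_Iic, ← sum_mul, mul_comm] at this

theorem sum_Iic_sub_nonneg (h : IsIsotonicProj v u) (k : ι) : 0 ≤ ∑ i ∈ Iic k, (v i - u i) := by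
  have := h.mul_sum_Iic_sub_nonpos (k := k) (c := -1) fun j hkj => by linarith [h.1 hkj.le]
  linarith

theorem eq_of_covBy (h : IsIsotonicProj v u) {k k' : ι} (hkk' : k ⋖ k')
    (hr : 0 < ∑ i ∈ Iic k, (v i - u i)) : u k' = u k := by
  refine (h.1 hkk'.le).antisymm' (not_lt.1 fun hlt => ?_)
  have := h.mul_sum_Iic_sub_nonpos (k := k) (c := u k' - u k) fun j hkj => by
    linarith [h.1 (hkk'.ge_of_gt hkj)]
  exact this.not_gt (mul_pos (sub_pos.2 hlt) hr)

end IsIsotonicProj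

theorem exists_covBy_sum_Iic_pos [LocallyFiniteOrderBot ι] {r : ι → ℝ}
    (hS : ∀ k, 0 ≤ ∑ i ∈ Iic k, r i) (hsum : ∑ i, r i = 0) (hr : r ≠ 0) :
    ∃ k k', k ⋖ k' ∧ 0 < ∑ i ∈ Iic k, r i := by
  obtain ⟨i₀, hi₀, hmin⟩ : ∃ i₀ ∈ univ.filter (r · ≠ 0), ∀ i ∈ univ.filter (r · ≠ 0), i₀ ≤ i :=
    exists_min_image _ id (by simpa [Finset.Nonempty, funext_iff] using hr)
  have hfirst : ∑ i ∈ Iic i₀, r i = r i₀ := by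
    refine sum_eq_single i₀ (fun i hi hne => ?_) (by simp)
    by_contra hri
    exact hne ((mem_Iic.1 hi).antisymm (hmin i (by simpa using hri)))
  have hpos : 0 < ∑ i ∈ Iic i₀, r i :=
    (hS i₀).lt_of_ne (hfirst ▸ (by simpa using hi₀ : r i₀ ≠ 0).symm)
  obtain ⟨j, hj⟩ : ∃ j, i₀ < j := by
    by_contra! hmax
    have : Iic i₀ = univ := eq_univ_of_forall fun j => mem_Iic.2 (hmax j)
    linarith [this ▸ hpos]
  obtain ⟨k', hk', -⟩ := exists_covBy_le_of_lt hj
  exact ⟨i₀, k', hk', hpos⟩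

end IsotonicProjection

theorem lp_isotonicProj_lt_general (m : ℕ) (v u : Fin m → ℝ)
    (hu : Monotone u)
    (hproj : ∀ w : Fin m → ℝ, Monotone w →
      Real.sqrt (∑ i, (v i - u i) ^ 2) ≤ Real.sqrt (∑ i, (v i - w i) ^ 2))
    (huv : u ≠ v) (g : Fin m → ℝ) (hg : StrictMono g) (p : ℝ) (hp : 1 < p) :
    ∑ i, |u i - g i| ^ p < ∑ i, |v i - g i| ^ p := by
  have hiso := isIsotonicProj_of_forall_sqrt_le hu hproj
  set φ : ℝ → ℝ := fun y => p * (|y| ^ (p - 2) * y)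
  have hφ : StrictMono φ := (strictMono_abs_rpow_sub_two_mul_self hp).const_mul (by linarith)
  have htangent (i : Fin m) : |u i - g i| ^ p + φ (u i - g i) * (v i - u i) ≤ |v i - g i| ^ p := by
    have := (strictConvexOn_abs_rpow hp).convexOn.add_mul_sub_le_of_hasDerivAt (Set.mem_univ _)
      (Set.mem_univ (v i - g i)) (hasDerivAt_abs_rpow (u i - g i) hp)
    simpa [φ, mul_assoc] using this
  have hgain : 0 < ∑ i, φ (u i - g i) * (v i - u i) :=
    Fin.sum_mul_pos_of_sum_Iic_nonneg hiso.sum_Iic_sub_nonneg hiso.sum_sub_eq_zero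
      (fun k k' hkk' hr => hφ (by linarith [hiso.eq_of_covBy hkk' hr, hg hkk'.lt]))
      (exists_covBy_sum_Iic_pos hiso.sum_Iic_sub_nonneg hiso.sum_sub_eq_zero
        (sub_ne_zero.2 (Ne.symm huv)))
  calc ∑ i, |u i - g i| ^ p
      < ∑ i, (|u i - g i| ^ p + φ (u i - g i) * (v i - u i)) := by
        rw [sum_add_distrib]; linarith
    _ ≤ ∑ i, |v i - g i| ^ p := sum_le_sum fun i _ => htangent i

/-- If the isotonic projection `u` of `v` is not `v` itself, then for any strictly
increasing target `g` and any `p > 1`, isotonic projection strictly improves the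
ℓ_p error. -/
theorem lp_isotonicProj_lt (m : ℕ) (hm : 1 ≤ m) (v u : Fin m → ℝ)
    (hu : Monotone u)
    (hproj : ∀ w : Fin m → ℝ, Monotone w →
      Real.sqrt (∑ i, (v i - u i) ^ 2) ≤ Real.sqrt (∑ i, (v i - w i) ^ 2))
    (huv : u ≠ v) (g : Fin m → ℝ) (hg : StrictMono g) (p : ℝ) (hp : 1 < p) :
    ∑ i, |u i - g i| ^ p < ∑ i, |v i - g i| ^ p :=
  lp_isotonicProj_lt_general m v u hu hproj huv g hg p hp
end
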